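/- arXiv:0912.2039 — 2 statements merged into one kernel-verified Lean document; each statement's English description precedes it below -/
import Mathlib

section
/- Let X and Y be non-Archimedean n-normed spaces over 𝒦 and let f : X → Y be an n-isometry. Then f preserves 2-collinearity: if x₀, x₁, x₂ ∈ X are 2-collinear, then f(x₀), f(x₁), f(x₂) are 2-collinear in Y. -/
/-- A non-Archimedean valuation on a linearly ordered field `K`:
a map `v : K → ℝ` with `v r ≥ 0`, `v r = 0 ↔ r = 0`, multiplicativity and
the ultrametric inequality. -/
structure NAValuation (K : Type*) [Field K] [LinearOrder K] [IsStrictOrderedRing K] where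
  v : K → ℝ
  nonneg : ∀ r, 0 ≤ v r
  eq_zero_iff : ∀ r, v r = 0 ↔ r = 0
  map_mul : ∀ r s, v (r * s) = v r * v s
  ultra : ∀ r s, v (r + s) ≤ max (v r) (v s)

/-- `N` is a non-Archimedean `n`-norm on the `K`-vector space `X`
(relative to the non-Archimedean valuation `val` on `K`). -/
structure IsNANorm {K : Type*} [Field K] [LinearOrder K] [IsStrictOrderedRing K] (val : NAValuation K)
    (X : Type*) [AddCommGroup X] [Module K X] {n : ℕ}
    (N : (Fin n → X) → ℝ) : Prop where
  nonneg : ∀ x, 0 ≤ N x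
  eq_zero_iff : ∀ x, N x = 0 ↔ ¬ LinearIndependent K x
  perm : ∀ (x : Fin n → X) (σ : Equiv.Perm (Fin n)), N (x ∘ σ) = N x
  smul : ∀ (x : Fin n → X) (i : Fin n) (α : K) (y : X),
    N (Function.update x i (α • y)) = val.v α * N (Function.update x i y)
  add_le : ∀ (x : Fin n → X) (i : Fin n) (y z : X),
    N (Function.update x i (y + z)) ≤
      max (N (Function.update x i y)) (N (Function.update x i z))

/-- `f : X → Y` is an `n`-isometry with respect to the `n`-norms `NX`, `NY`. -/
def IsNIsometry (K : Type*) [Field K] [LinearOrder K] [IsStrictOrderedRing K] {X Y : Type*}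
    [AddCommGroup X] [Module K X] [AddCommGroup Y] [Module K Y] {n : ℕ}
    (NX : (Fin n → X) → ℝ) (NY : (Fin n → Y) → ℝ) (f : X → Y) : Prop :=
  ∀ (x₀ : X) (x : Fin n → X), NY (fun i => f (x i) - f x₀) = NX (fun i => x i - x₀)

/-- Three points `x₀, x₁, x₂` are 2-collinear if `x₁ - x₀` and `x₂ - x₀`
are linearly dependent. -/
def Collinear2 (K : Type*) [Field K] [LinearOrder K] [IsStrictOrderedRing K] {X : Type*}
    [AddCommGroup X] [Module K X] (x₀ x₁ x₂ : X) : Prop :=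
  ¬ LinearIndependent K ![x₁ - x₀, x₂ - x₀]

/-- `p` is an interior point of the triangle with vertices `x₀, x₁, x₂`. -/
def InteriorPoint (K : Type*) [Field K] [LinearOrder K] [IsStrictOrderedRing K] {X : Type*}
    [AddCommGroup X] [Module K X] (x₀ x₁ x₂ p : X) : Prop :=
  ∃ t₀ t₁ t₂ : K, t₀ + t₁ + t₂ = 1 ∧ 0 < t₀ ∧ 0 < t₁ ∧ 0 < t₂ ∧
    p = t₀ • x₀ + t₁ • x₁ + t₂ • x₂

/-- `f` is interior preserving: it maps interior points of a (nondegenerate)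
triangle to interior points of the image triangle. -/
def InteriorPreserving (K : Type*) [Field K] [LinearOrder K] [IsStrictOrderedRing K] {X Y : Type*}
    [AddCommGroup X] [Module K X] [AddCommGroup Y] [Module K Y] (f : X → Y) : Prop :=
  ∀ x₀ x₁ x₂ p : X, ¬ Collinear2 K x₀ x₁ x₂ → InteriorPoint K x₀ x₁ x₂ p →
    InteriorPoint K (f x₀) (f x₁) (f x₂) (f p)

/-! The `n`-norm vanishes exactly on dependent families, so an `n`-isometry preserves linear
independence of every family `xᵢ - p`. Extend `x₁ - x₀` to an independent family
`c₀ = x₁ - x₀, c₁, …, cₙ₋₁`; the images `dᵢ = f (x₀ + cᵢ) - f x₀` are then independent. For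
`j ≠ 0`, replacing `cⱼ` by `x₂ - x₀` gives a dependent family, hence so does replacing `dⱼ` by
`f x₂ - f x₀`, i.e. `f x₂ - f x₀` lies in the span of the `dᵢ` with `i ≠ j`. By uniqueness of
coordinates, the intersection of these spans over all `j ≠ 0` is the line spanned by
`d₀ = f x₁ - f x₀`. -/

open Function Submodule

section LinearAlgebra

variable {K V ι : Type*} [DivisionRing K] [AddCommGroup V] [Module K V]

theorem LinearIndependent.linearIndependent_update_iff [DecidableEq ι] {d : ι → V}
    (hd : LinearIndependent K d) (j : ι) (w : V) :
    LinearIndependent K (Function.update d j w) ↔ w ∉ span K (d '' {j}ᶜ) := by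
  have hcompl : Set.EqOn (Function.update d j w) d {j}ᶜ := fun i hi => update_of_ne hi w d
  rw [← linearIndepOn_univ_iff, ← Set.union_compl_self {j}, Set.singleton_union,
    linearIndepOn_insert (s := {j}ᶜ) (fun h => h rfl), update_self, hcompl.image_eq,
    linearIndepOn_congr hcompl]
  exact and_iff_right (hd.linearIndepOn _)

theorem LinearIndependent.mem_span_singleton_of_forall_mem_span_image_compl [Nontrivial ι]
    {d : ι → V} (hd : LinearIndependent K d) {i₀ : ι} {w : V}
    (h : ∀ j ≠ i₀, w ∈ span K (d '' {j}ᶜ)) : w ∈ K ∙ d i₀ := by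
  obtain ⟨j₁, hj₁⟩ := exists_ne i₀
  obtain ⟨l, -, rfl⟩ := (Finsupp.mem_span_image_iff_linearCombination K).1 (h j₁ hj₁)
  have hl : l ∈ Finsupp.supported K K {i₀} := by
    intro j hj
    by_contra hne
    obtain ⟨l', hl', heq⟩ := (Finsupp.mem_span_image_iff_linearCombination K).1 (h j hne)
    exact hl' (hd heq ▸ hj) rfl
  rw [← Set.image_singleton]
  exact (Finsupp.mem_span_image_iff_linearCombination K).2 ⟨l, hl, rfl⟩

theorem exists_linearIndependent_fin_apply_zero_eq {n : ℕ} [NeZero n]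
    (hn : n ≤ Module.rank K V) {v : V} (hv : v ≠ 0) :
    ∃ c : Fin n → V, LinearIndependent K c ∧ c 0 = v := by
  suffices ∀ m : ℕ, (m + 1 : ℕ) ≤ Module.rank K V →
      ∃ c : Fin (m + 1) → V, LinearIndependent K c ∧ c 0 = v by
    obtain ⟨m, rfl⟩ := Nat.exists_eq_succ_of_ne_zero (NeZero.ne n)
    exact this m hn
  intro m hm
  induction m with
  | zero => exact ⟨![v], .of_subsingleton (ι := Fin 1) 0 hv, rfl⟩
  | succ m ih =>
    obtain ⟨c, hc, hc0⟩ := ih (le_trans (by norm_cast; omega) hm)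
    obtain ⟨x, hx⟩ := exists_linearIndependent_snoc_of_lt_rank hc
      (lt_of_lt_of_le (by norm_cast; omega) hm)
    exact ⟨Fin.snoc c x, hx, hc0⟩

end LinearAlgebra

section NIsometry

variable {K : Type*} [Field K] [LinearOrder K] [IsStrictOrderedRing K]
  {X Y : Type*} [AddCommGroup X] [Module K X] [AddCommGroup Y] [Module K Y]

theorem collinear2_of_eq {x₀ x₁ : X} (h : x₁ = x₀) (x₂ : X) : Collinear2 K x₀ x₁ x₂ :=
  fun hli => hli.ne_zero 0 (by simp [h])

theorem collinear2_of_mem_span_singleton {x₀ x₁ x₂ : X} (h : x₂ - x₀ ∈ K ∙ (x₁ - x₀)) :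
    Collinear2 K x₀ x₁ x₂ := by
  obtain ⟨a, ha⟩ := mem_span_singleton.1 h
  intro hli
  have := LinearIndependent.pair_iff.1 hli a (-1) (by rw [ha, neg_one_smul, add_neg_cancel])
  exact one_ne_zero (neg_eq_zero.1 this.2)

theorem Collinear2.mem_span_singleton {x₀ x₁ x₂ : X} (h : Collinear2 K x₀ x₁ x₂)
    (h₁₀ : x₁ ≠ x₀) : x₂ - x₀ ∈ K ∙ (x₁ - x₀) := by
  by_contra hx₂
  refine h ((LinearIndependent.pair_iff' (sub_ne_zero.2 h₁₀)).2 fun a ha => hx₂ ?_)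
  exact Submodule.mem_span_singleton.2 ⟨a, ha⟩

variable {val : NAValuation K} {n : ℕ} {NX : (Fin n → X) → ℝ} {NY : (Fin n → Y) → ℝ}
  {f : X → Y}

theorem IsNIsometry.linearIndependent_sub_iff (hNX : IsNANorm val X NX)
    (hNY : IsNANorm val Y NY) (hf : IsNIsometry K NX NY f) (p : X) (x : Fin n → X) :
    LinearIndependent K (fun i => f (x i) - f p) ↔ LinearIndependent K (fun i => x i - p) := by
  rw [← not_iff_not, ← hNY.eq_zero_iff, ← hNX.eq_zero_iff, hf p x]

theorem IsNIsometry.sub_mem_span_image_compl_iff (hNX : IsNANorm val X NX)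
    (hNY : IsNANorm val Y NY) (hf : IsNIsometry K NX NY f) {p : X} {x : Fin n → X}
    (hx : LinearIndependent K (fun i => x i - p)) (j : Fin n) (y : X) :
    f y - f p ∈ span K ((fun i => f (x i) - f p) '' {j}ᶜ) ↔
      y - p ∈ span K ((fun i => x i - p) '' {j}ᶜ) := by
  have hfx := (hf.linearIndependent_sub_iff hNX hNY p x).2 hx
  have key := hf.linearIndependent_sub_iff hNX hNY p (update x j y)
  change LinearIndependent K ((fun z => f z - f p) ∘ update x j y) ↔
    LinearIndependent K ((fun z => z - p) ∘ update x j y) at key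
  rw [comp_update, comp_update] at key
  exact not_iff_not.1 ((hfx.linearIndependent_update_iff j _).symm.trans
    (key.trans (hx.linearIndependent_update_iff j _)))

end NIsometry

theorem nisometry_preserves_collinear2_general {K : Type*} [Field K] [LinearOrder K] [IsStrictOrderedRing K]
    (val : NAValuation K) {X Y : Type*} [AddCommGroup X] [Module K X]
    [AddCommGroup Y] [Module K Y] {n : ℕ} (hn : 2 ≤ n)
    (NX : (Fin n → X) → ℝ) (NY : (Fin n → Y) → ℝ)
    (hNX : IsNANorm val X NX) (hNY : IsNANorm val Y NY)
    (hdX : (n : Cardinal) ≤ Module.rank K X)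
    (f : X → Y) (hf : IsNIsometry K NX NY f)
    (x₀ x₁ x₂ : X) (h : Collinear2 K x₀ x₁ x₂) :
    Collinear2 K (f x₀) (f x₁) (f x₂) := by
  rcases eq_or_ne x₁ x₀ with h₁₀ | h₁₀
  · exact collinear2_of_eq (congrArg f h₁₀) _
  have : NeZero n := ⟨by omega⟩
  have : Nontrivial (Fin n) := Fin.nontrivial_iff_two_le.2 hn
  obtain ⟨c, hc, hc₀⟩ := exists_linearIndependent_fin_apply_zero_eq hdX (sub_ne_zero.2 h₁₀)
  let x : Fin n → X := fun i => c i + x₀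
  have hx : LinearIndependent K (fun i => x i - x₀) := by simpa [x] using hc
  have hfx := (hf.linearIndependent_sub_iff hNX hNY x₀ x).2 hx
  have hx₁ : x 0 = x₁ := by simp [x, hc₀]
  have hfx₂ : ∀ j ≠ 0, f x₂ - f x₀ ∈ span K ((fun i => f (x i) - f x₀) '' {j}ᶜ) := by
    intro j hj
    have hx₁_mem : x₁ - x₀ ∈ (fun i => x i - x₀) '' {j}ᶜ := ⟨0, hj.symm, congrArg (· - x₀) hx₁⟩
    exact (hf.sub_mem_span_image_compl_iff hNX hNY hx j x₂).2
      (span_mono (Set.singleton_subset_iff.2 hx₁_mem) (h.mem_span_singleton h₁₀))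
  have hfx₂_line := hfx.mem_span_singleton_of_forall_mem_span_image_compl hfx₂
  exact collinear2_of_mem_span_singleton (hx₁ ▸ hfx₂_line)

/-- an `n`-isometry preserves 2-collinearity. -/
theorem nisometry_preserves_collinear2 {K : Type*} [Field K] [LinearOrder K] [IsStrictOrderedRing K]
    (val : NAValuation K) {X Y : Type*} [AddCommGroup X] [Module K X]
    [AddCommGroup Y] [Module K Y] {n : ℕ} (hn : 2 ≤ n)
    (NX : (Fin n → X) → ℝ) (NY : (Fin n → Y) → ℝ)
    (hNX : IsNANorm val X NX) (hNY : IsNANorm val Y NY)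
    (hdX : (n : Cardinal) ≤ Module.rank K X)
    (hdY : (n : Cardinal) ≤ Module.rank K Y)
    (f : X → Y) (hf : IsNIsometry K NX NY f)
    (x₀ x₁ x₂ : X) (h : Collinear2 K x₀ x₁ x₂) :
    Collinear2 K (f x₀) (f x₁) (f x₂) :=
  nisometry_preserves_collinear2_general val hn NX NY hNX hNY hdX f hf x₀ x₁ x₂ h
end

section
/- Let X and Y be non-Archimedean n-normed spaces over 𝒦 and let f : X → Y be an n-isometry with f(0) = 0. Then the following conditions are equivalent: (i) f is additive, i.e. f(x₀+x₁) = f(x₀)+f(x₁) for all x₀, x₁ ∈ X; (ii) f preserves midpoints, i.e. f((x₀+x₁)/2) = (f(x₀)+f(x₁))/2 for all x₀, x₁ ∈ X with x₀ ≠ x₁; (iii) f preserves barycenters of triangles, i.e. f((x₀+x₁+x₂)/3) = (f(x₀)+f(x₁)+f(x₂))/3 for all x₀, x₁, x₂ ∈ X that are not 2-collinear. -/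
/-! Additivity gives midpoints and barycenters by dividing by 2 and 3; conversely, midpoint
preservation and `f 0 = 0` give `f (2⁻¹ • z) = 2⁻¹ • f z`, hence additivity.

For barycenters, the triangles `(y, -y, z)` show that `f y + f (-y)` does not depend on `y ≠ 0`
and that `f (3 • w) = 2 • f w - f (-w)`, while the triangle `(3 • a, 3 • b, 0)` gives
`3 • f (a + b) = f (3 • a) + f (3 • b)` for independent `a, b`. Evaluating `f (a + b) + f (-a - b)`
with both forces `f y + f (-y) = 0`, so `f` is odd, commutes with scaling by 3, and is additive on
independent pairs; a dependent pair `a, t • a` is split along a vector independent of `a`. -/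

section

variable {K : Type*} [Field K] {X : Type*} [AddCommGroup X] [Module K X]

theorem LinearIndependent.pair_of_eq_smul_add_smul {u v u' v' : X}
    (h : LinearIndependent K ![u, v]) (a b c d : K) (hdet : a * d ≠ b * c)
    (hu : u' = a • u + b • v) (hv : v' = c • u + d • v) :
    LinearIndependent K ![u', v'] := by
  subst hu hv
  exact (LinearIndependent.pair_add_smul_add_smul_iff a b c d).mpr ⟨h, hdet⟩

theorem exists_linearIndependent_pair_and_pair_of_one_lt_rank (hrank : 1 < Module.rank K X)
    {y y' : X} (hy : y ≠ 0) (hy' : y' ≠ 0) :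
    ∃ z, LinearIndependent K ![z, y] ∧ LinearIndependent K ![z, y'] := by
  by_cases h : LinearIndependent K ![y, y']
  · exact ⟨y + y', h.pair_of_eq_smul_add_smul 1 1 1 0 (by simp) (by module) (by module),
      h.pair_of_eq_smul_add_smul 1 1 0 1 (by simp) (by module) (by module)⟩
  obtain ⟨t, rfl⟩ : ∃ t : K, t • y = y' := by
    simpa [LinearIndependent.pair_iff' hy] using h
  obtain ⟨z, hz⟩ := exists_linearIndependent_pair_of_one_lt_rank hrank hy
  have ht : t ≠ 0 := by rintro rfl; simp at hy'
  exact ⟨z, hz.pair_of_eq_smul_add_smul 0 1 1 0 (by simp) (by module) (by module),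
    hz.pair_of_eq_smul_add_smul 0 1 t 0 (by simpa [eq_comm]) (by module) (by module)⟩

theorem map_add_of_map_add_of_linearIndependent {Y : Type*} [AddCommGroup Y] {f : X → Y}
    (hrank : 1 < Module.rank K X) (hf0 : f 0 = 0)
    (hneg : ∀ x, f (-x) = -f x)
    (hind : ∀ a b : X, LinearIndependent K ![a, b] → f (a + b) = f a + f b) (a b : X) :
    f (a + b) = f a + f b := by
  by_cases h : LinearIndependent K ![a, b]
  · exact hind a b h
  rcases eq_or_ne a 0 with rfl | ha
  · simp [hf0]
  obtain ⟨t, rfl⟩ : ∃ t : K, t • a = b := by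
    simpa [LinearIndependent.pair_iff' ha] using h
  rcases eq_or_ne t 0 with rfl | ht
  · simp [hf0]
  rcases eq_or_ne t (-1) with rfl | ht'
  · simp [hf0, hneg]
  obtain ⟨y, hy⟩ := exists_linearIndependent_pair_of_one_lt_rank hrank ha
  calc f (a + t • a) = f ((a + y) + (t • a + -y)) := by congr 1; abel
    _ = f (a + y) + f (t • a + -y) :=
      hind _ _ (hy.pair_of_eq_smul_add_smul 1 1 t (-1) (fun h => ht' (by linear_combination -h))
        (by module) (by module))
    _ = f a + f y + (f (t • a) + f (-y)) := by
      rw [hind a y hy,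
        hind _ _ (hy.pair_of_eq_smul_add_smul t 0 0 (-1) (by simpa) (by module) (by module))]
    _ = f a + f (t • a) := by rw [hneg]; abel

variable {Y : Type*} [AddCommGroup Y] [Module K Y]

variable (K) in
def PreservesMidpoints (f : X → Y) : Prop :=
  ∀ x₀ x₁ : X, x₀ ≠ x₁ → f ((2 : K)⁻¹ • (x₀ + x₁)) = (2 : K)⁻¹ • (f x₀ + f x₁)

variable (K) in
def PreservesBarycenters (f : X → Y) : Prop :=
  ∀ x₀ x₁ x₂ : X, LinearIndependent K ![x₁ - x₀, x₂ - x₀] →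
    f ((3 : K)⁻¹ • (x₀ + x₁ + x₂)) = (3 : K)⁻¹ • (f x₀ + f x₁ + f x₂)

variable {f : X → Y}

theorem preservesMidpoints_of_map_add (hadd : ∀ x y, f (x + y) = f x + f y) :
    PreservesMidpoints K f := fun x₀ x₁ _ => by
  simpa [hadd] using map_inv_natCast_smul (AddMonoidHom.mk' f hadd) K K 2 (x₀ + x₁)

theorem preservesBarycenters_of_map_add (hadd : ∀ x y, f (x + y) = f x + f y) :
    PreservesBarycenters K f := fun x₀ x₁ x₂ _ => by
  simpa [hadd] using map_inv_natCast_smul (AddMonoidHom.mk' f hadd) K K 3 (x₀ + x₁ + x₂)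

variable [CharZero K]

theorem PreservesMidpoints.map_add (hm : PreservesMidpoints K f) (hf0 : f 0 = 0) (x y : X) :
    f (x + y) = f x + f y := by
  have half : ∀ z : X, f ((2 : K)⁻¹ • z) = (2 : K)⁻¹ • f z := fun z => by
    rcases eq_or_ne z 0 with rfl | hz
    · simp [hf0]
    · simpa [hf0] using hm z 0 hz
  have mid : f ((2 : K)⁻¹ • (x + y)) = (2 : K)⁻¹ • (f x + f y) := by
    rcases eq_or_ne x y with rfl | hxy
    · simp only [← two_smul K, inv_smul_smul₀ (two_ne_zero' K)]
    · exact hm x y hxy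
  exact smul_right_injective Y (inv_ne_zero (two_ne_zero' K)) ((half _).symm.trans mid)

namespace PreservesBarycenters

variable (hb : PreservesBarycenters K f)
include hb

theorem map_add_eq_inv_three_smul (hf0 : f 0 = 0) {a b : X} (h : LinearIndependent K ![a, b]) :
    f (a + b) = (3 : K)⁻¹ • (f ((3 : K) • a) + f ((3 : K) • b)) := by
  have := hb ((3 : K) • a) ((3 : K) • b) 0
    (h.pair_of_eq_smul_add_smul (-3) 3 (-3) 0 (by norm_num) (by module) (by module))
  rwa [hf0, add_zero, add_zero, show (3 : K)⁻¹ • ((3 : K) • a + (3 : K) • b) = a + b by module]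
    at this

theorem map_inv_three_smul {z y : X} (h : LinearIndependent K ![z, y]) :
    f ((3 : K)⁻¹ • z) = (3 : K)⁻¹ • (f y + f (-y) + f z) := by
  have := hb y (-y) z
    (h.pair_of_eq_smul_add_smul 0 (-2) 1 (-1) (by norm_num) (by module) (by module))
  rwa [show y + -y + z = z by abel] at this

theorem map_add_map_neg_eq (hrank : 1 < Module.rank K X) {y y' : X} (hy : y ≠ 0)
    (hy' : y' ≠ 0) : f y + f (-y) = f y' + f (-y') := by
  obtain ⟨z, hzy, hzy'⟩ := exists_linearIndependent_pair_and_pair_of_one_lt_rank hrank hy hy'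
  have := (hb.map_inv_three_smul hzy).symm.trans (hb.map_inv_three_smul hzy')
  exact add_right_cancel (smul_right_injective Y (by norm_num) this)

theorem map_three_smul (hrank : 1 < Module.rank K X) (hf0 : f 0 = 0) (w : X) :
    f ((3 : K) • w) = (2 : K) • f w - f (-w) := by
  rcases eq_or_ne w 0 with rfl | hw
  · simp [hf0]
  obtain ⟨y, hy⟩ := exists_linearIndependent_pair_of_one_lt_rank hrank
    (smul_ne_zero (three_ne_zero' K) hw)
  have h := hb.map_inv_three_smul hy
  rw [inv_smul_smul₀ (three_ne_zero' K),
    hb.map_add_map_neg_eq hrank (by simpa using hy.ne_zero 1) hw] at h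
  linear_combination (norm := module) (-3 : K) • h

theorem map_neg (hrank : 1 < Module.rank K X) (hf0 : f 0 = 0) (y : X) : f (-y) = -f y := by
  obtain ⟨e, he⟩ := rank_pos_iff_exists_ne_zero.mp (zero_lt_one.trans hrank)
  obtain ⟨b, h⟩ := exists_linearIndependent_pair_of_one_lt_rank hrank he
  have hb0 : b ≠ 0 := by simpa using h.ne_zero 1
  have heb : e + b ≠ 0 := by simpa using (LinearIndependent.pair_add_left_iff.mpr h).ne_zero 0
  have hadd := hb.map_add_eq_inv_three_smul hf0 h
  have hadd' := hb.map_add_eq_inv_three_smul hf0 (by simpa using h : LinearIndependent K ![-e, -b])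
  simp only [hb.map_three_smul hrank hf0, neg_neg] at hadd hadd'
  have c₁ := hb.map_add_map_neg_eq hrank heb he
  have c₂ := hb.map_add_map_neg_eq hrank hb0 he
  rw [neg_add] at c₁
  -- `c := f e + f (-e)` equals `f (e + b) + f (-e + -b)`, which the barycenter identities turn
  -- into `3⁻¹ • 2 • c`.
  have hc : f e + f (-e) = 0 := by
    linear_combination (norm := module) (-3 : K) • c₁ + (3 : K) • hadd + (3 : K) • hadd' + c₂
  rcases eq_or_ne y 0 with rfl | hy
  · simp [hf0]
  exact eq_neg_of_add_eq_zero_right ((hb.map_add_map_neg_eq hrank hy he).trans hc)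

theorem map_add (hrank : 1 < Module.rank K X) (hf0 : f 0 = 0) (a b : X) :
    f (a + b) = f a + f b :=
  map_add_of_map_add_of_linearIndependent hrank hf0 (hb.map_neg hrank hf0) (fun _ _ h => by
    rw [hb.map_add_eq_inv_three_smul hf0 h, hb.map_three_smul hrank hf0,
      hb.map_three_smul hrank hf0, hb.map_neg hrank hf0, hb.map_neg hrank hf0]
    module) a b

end PreservesBarycenters

end

theorem nisometry_additive_iff_midpoint_iff_barycenter_general {K : Type*}
    [Field K] [LinearOrder K] [IsStrictOrderedRing K] {X Y : Type*}
    [AddCommGroup X] [Module K X] [AddCommGroup Y] [Module K Y] {n : ℕ}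
    (hn : 2 ≤ n)
    (hdX : (n : Cardinal) ≤ Module.rank K X)
    (f : X → Y) (hf0 : f 0 = 0) :
    ((∀ x₀ x₁ : X, f (x₀ + x₁) = f x₀ + f x₁) ↔
      (∀ x₀ x₁ : X, x₀ ≠ x₁ →
        f ((2 : K)⁻¹ • (x₀ + x₁)) = (2 : K)⁻¹ • (f x₀ + f x₁))) ∧
    ((∀ x₀ x₁ : X, x₀ ≠ x₁ →
        f ((2 : K)⁻¹ • (x₀ + x₁)) = (2 : K)⁻¹ • (f x₀ + f x₁)) ↔
      (∀ x₀ x₁ x₂ : X, ¬ Collinear2 K x₀ x₁ x₂ →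
        f ((3 : K)⁻¹ • (x₀ + x₁ + x₂)) = (3 : K)⁻¹ • (f x₀ + f x₁ + f x₂))) := by
  have hrank : 1 < Module.rank K X :=
    lt_of_lt_of_le (by norm_num) ((Nat.cast_le.mpr hn : ((2 : ℕ) : Cardinal) ≤ n).trans hdX)
  simp only [Collinear2, not_not]
  exact ⟨⟨preservesMidpoints_of_map_add, fun hmid => PreservesMidpoints.map_add hmid hf0⟩,
    ⟨fun hmid => preservesBarycenters_of_map_add (PreservesMidpoints.map_add hmid hf0),
      fun hbar => preservesMidpoints_of_map_add (PreservesBarycenters.map_add hbar hrank hf0)⟩⟩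

/-- for an `n`-isometry `f` with `f 0 = 0`, additivity,
midpoint preservation, and barycenter preservation are equivalent. -/
theorem nisometry_additive_iff_midpoint_iff_barycenter {K : Type*}
    [Field K] [LinearOrder K] [IsStrictOrderedRing K] (val : NAValuation K) {X Y : Type*}
    [AddCommGroup X] [Module K X] [AddCommGroup Y] [Module K Y] {n : ℕ}
    (hn : 2 ≤ n) (NX : (Fin n → X) → ℝ) (NY : (Fin n → Y) → ℝ)
    (hNX : IsNANorm val X NX) (hNY : IsNANorm val Y NY)
    (hdX : (n : Cardinal) ≤ Module.rank K X)
    (hdY : (n : Cardinal) ≤ Module.rank K Y)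
    (f : X → Y) (hf : IsNIsometry K NX NY f) (hf0 : f 0 = 0) :
    ((∀ x₀ x₁ : X, f (x₀ + x₁) = f x₀ + f x₁) ↔
      (∀ x₀ x₁ : X, x₀ ≠ x₁ →
        f ((2 : K)⁻¹ • (x₀ + x₁)) = (2 : K)⁻¹ • (f x₀ + f x₁))) ∧
    ((∀ x₀ x₁ : X, x₀ ≠ x₁ →
        f ((2 : K)⁻¹ • (x₀ + x₁)) = (2 : K)⁻¹ • (f x₀ + f x₁)) ↔
      (∀ x₀ x₁ x₂ : X, ¬ Collinear2 K x₀ x₁ x₂ →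
        f ((3 : K)⁻¹ • (x₀ + x₁ + x₂)) = (3 : K)⁻¹ • (f x₀ + f x₁ + f x₂))) :=
  nisometry_additive_iff_midpoint_iff_barycenter_general hn hdX f hf0
end
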